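/- arXiv:2507.19182 — 8 statements merged into one kernel-verified Lean document; each statement's English description precedes it below -/
import Mathlib

section
/- Define T : ℕ → (Fin p → ℕ) → R by: T_1(δ_l) = w(l) for each l ∈ Fin p and T_1(κ) = 0 for every other κ; and for h ≥ 1, T_{h+1}(κ) = Σ_{l : κ(l) ≥ 1} T_h(κ − δ_l) · w(l) · ∏_{i ∈ Fin p} r(i)(l)^{(κ−δ_l)(i)}. Then for every n ≥ 1 and every κ : Fin p → ℕ with Σ_i κ(i) = n, one has T_n(κ) = Σ_{c : Fin n → Fin p, config(c) = κ} W_n(c). -/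
/-!
Splitting a cell assignment `c : Fin (n + 1) → Fin p` into `Fin.init c` and its last value `l`
adds `δ_l` to the configuration and multiplies the ordered weight by
`w l * ∏ i, r i l ^ cellConfig (Fin.init c) i`, since the new pairs are exactly the `(a, last)`.
Hence the sums of ordered weights over the configuration classes satisfy the recursion defining `T`,
with the same initial values.
-/

open Finset

/-- The cell configuration of a cell assignment. -/
def cellConfig {p n : ℕ} (c : Fin n → Fin p) : Fin p → ℕ :=
  fun i => (Finset.univ.filter (fun a => c a = i)).card

/-- The indicator vector `δ_l`. -/
def delta {p : ℕ} (l : Fin p) : Fin p → ℕ := fun i => if i = l then 1 else 0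

/-- The ordered weight of a cell assignment. -/
def ordW {R : Type*} [CommRing R] {p n : ℕ} (w : Fin p → R) (r : Fin p → Fin p → R)
    (c : Fin n → Fin p) : R :=
  (∏ a, w (c a)) * ∏ a, ∏ b ∈ Finset.univ.filter (fun b => a < b), r (c a) (c b)

/-- The dynamic-programming table `T` of IncrementalWFOMC:
`T 1 (δ_l) = w l` (and `0` on any other configuration), and
`T (h+1) κ = ∑_{l : κ l ≥ 1} T h (κ - δ_l) * w l * ∏ i, r i l ^ ((κ - δ_l) i)`. -/
def T {R : Type*} [CommRing R] {p : ℕ} (w : Fin p → R) (r : Fin p → Fin p → R) :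
    ℕ → (Fin p → ℕ) → R
  | 0, _ => 0
  | 1, κ => ∑ l : Fin p, if κ = delta l then w l else 0
  | h + 2, κ =>
      ∑ l ∈ Finset.univ.filter (fun l : Fin p => 1 ≤ κ l),
        T w r (h + 1) (κ - delta l) * w l * ∏ i, r i l ^ ((κ - delta l) i)

theorem delta_le_iff {p : ℕ} {l : Fin p} {κ : Fin p → ℕ} : delta l ≤ κ ↔ 1 ≤ κ l := by
  refine ⟨fun h => by simpa [delta] using h l, fun h i => ?_⟩
  by_cases hi : i = l <;> simp [delta, hi, h]

theorem add_delta_eq_iff {p : ℕ} {l : Fin p} {κ ν : Fin p → ℕ} :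
    ν + delta l = κ ↔ 1 ≤ κ l ∧ ν = κ - delta l := by
  rw [← delta_le_iff]
  constructor
  · rintro rfl
    exact ⟨le_add_self, (add_tsub_cancel_right ν _).symm⟩
  · rintro ⟨hl, rfl⟩
    exact tsub_add_cancel_of_le hl

theorem prod_comp_eq_prod_pow_cellConfig {M : Type*} [CommMonoid M] {p n : ℕ}
    (c : Fin n → Fin p) (f : Fin p → M) : ∏ a, f (c a) = ∏ i, f i ^ cellConfig c i := by
  rw [← prod_fiberwise univ c (fun a => f (c a))]
  exact prod_congr rfl fun i _ => prod_eq_pow_card fun a ha => by rw [(mem_filter.1 ha).2]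

theorem cellConfig_snoc {p n : ℕ} (c : Fin n → Fin p) (l : Fin p) :
    cellConfig (Fin.snoc c l : Fin (n + 1) → Fin p) = cellConfig c + delta l := by
  funext i
  simp only [cellConfig, Pi.add_apply, delta, card_filter, Fin.sum_univ_castSucc,
    Fin.snoc_castSucc, Fin.snoc_last, eq_comm]

theorem ordW_snoc {R : Type*} [CommRing R] {p n : ℕ} (w : Fin p → R) (r : Fin p → Fin p → R)
    (c : Fin n → Fin p) (l : Fin p) :
    ordW w r (Fin.snoc c l : Fin (n + 1) → Fin p)
      = ordW w r c * w l * ∏ i, r i l ^ cellConfig c i := by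
  have last_not_lt (b : Fin (n + 1)) : ¬ Fin.last n < b := not_lt.2 (Fin.le_last b)
  simp only [ordW, Fin.prod_univ_castSucc, Fin.snoc_castSucc, Fin.snoc_last, prod_filter,
    Fin.castSucc_lt_castSucc_iff, Fin.castSucc_lt_last, last_not_lt, if_true, if_false,
    prod_const_one, mul_one, prod_mul_distrib, ← prod_comp_eq_prod_pow_cellConfig c (r · l)]
  ring

section CellSum

variable {R : Type*} [CommRing R] {p : ℕ} (w : Fin p → R) (r : Fin p → Fin p → R)

def ordWSum (n : ℕ) (κ : Fin p → ℕ) : R :=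
  ∑ c ∈ univ.filter (fun c : Fin n → Fin p => cellConfig c = κ), ordW w r c

theorem ordWSum_one (κ : Fin p → ℕ) :
    ordWSum w r 1 κ = ∑ l : Fin p, if κ = delta l then w l else 0 := by
  rw [ordWSum, sum_filter]
  refine Fintype.sum_equiv (Equiv.funUnique (Fin 1) (Fin p)) _ _ fun c => ?_
  have hconfig : cellConfig c = delta (c 0) := by
    funext i
    simp only [cellConfig, delta, card_filter, Fin.sum_univ_one, eq_comm]
  have hweight : ordW w r c = w (c 0) := by
    simp [ordW, prod_filter]
  simp [hconfig, hweight, eq_comm]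

theorem ordWSum_succ (n : ℕ) (κ : Fin p → ℕ) :
    ordWSum w r (n + 1) κ = ∑ l ∈ univ.filter (fun l : Fin p => 1 ≤ κ l),
      ordWSum w r n (κ - delta l) * w l * ∏ i, r i l ^ ((κ - delta l) i) := by
  rw [ordWSum, sum_filter, ← (Fin.snocEquiv fun _ => Fin p).sum_comp, Fintype.sum_prod_type,
    sum_filter]
  refine sum_congr rfl fun l _ => ?_
  simp only [Fin.snocEquiv, Equiv.coe_fn_mk, cellConfig_snoc, ordW_snoc, add_delta_eq_iff,
    ordWSum, sum_filter, sum_mul]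
  by_cases hl : 1 ≤ κ l
  · simp only [hl, true_and, if_true]
    refine sum_congr rfl fun c _ => ?_
    split_ifs with hc
    · rw [hc]
    · rw [zero_mul, zero_mul]
  · simp only [hl, false_and, if_false, sum_const_zero]

theorem T_succ_eq_ordWSum (m : ℕ) : T w r (m + 1) = ordWSum w r (m + 1) := by
  induction m with
  | zero => funext κ; rw [ordWSum_one, T]
  | succ m ih => funext κ; simp only [T, ih, ordWSum_succ]

end CellSum

theorem stmt1_general {R : Type*} [CommRing R] {p : ℕ}
    (w : Fin p → R) (r : Fin p → Fin p → R) (n : ℕ) (hn : 1 ≤ n)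
    (κ : Fin p → ℕ) :
    T w r n κ =
      ∑ c ∈ Finset.univ.filter (fun c : Fin n → Fin p => cellConfig c = κ),
        ordW w r c := by
  obtain ⟨m, rfl⟩ := Nat.exists_eq_add_of_le' hn
  rw [T_succ_eq_ordWSum, ordWSum]

theorem stmt1 {R : Type*} [CommRing R] {p : ℕ} (hp : 1 ≤ p)
    (w : Fin p → R) (r : Fin p → Fin p → R) (n : ℕ) (hn : 1 ≤ n)
    (κ : Fin p → ℕ) (hκ : ∑ i, κ i = n) :
    T w r n κ =
      ∑ c ∈ Finset.univ.filter (fun c : Fin n → Fin p => cellConfig c = κ),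
        ordW w r c :=
  stmt1_general w r n hn κ
end

section
/- Assume r is symmetric, i.e., r(i)(j) = r(j)(i) for all i, j ∈ Fin p. Then for every κ : Fin p → ℕ with Σ_i κ(i) = n and every fixed c₀ : Fin n → Fin p with config(c₀) = κ, one has Σ_{c : config(c) = κ} W_n(c) = (n! / ∏_{i} κ(i)!) · W_n(c₀), where n! / ∏_i κ(i)! is the multinomial coefficient of κ. -/
open Finset

/-!
Since `r` is symmetric, the pair product in `W_n(c)` is a product over unordered pairs of
distinct positions, which a permutation of the positions merely reorders; hence `W_n` is
constant along the orbits of `Sₙ` acting on assignments by precomposition. The assignments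
with configuration `κ` form exactly one such orbit, and the stabilizer of `c₀` is
`∏ᵢ S_{κ i}`, so by orbit–stabilizer the orbit has `n! / ∏ᵢ κ(i)!` elements.
-/

open Equiv MulAction

section PairProducts

variable {ι M : Type*} [Fintype ι] [CommMonoid M]

lemma prod_filter_lt_eq_prod_filter_not_isDiag [LinearOrder ι] (g : Sym2 ι → M) :
    ∏ a, ∏ b with a < b, g s(a, b) = ∏ z with ¬ z.IsDiag, g z := by
  have h := sum_sym2_filter_not_isDiag (M := Additive M) univ (fun z => Additive.ofMul (g z))
  apply_fun Additive.toMul at h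
  simp only [toMul_sum, toMul_ofMul, sym2_univ] at h
  have hpairs : univ.offDiag.filter (fun q : ι × ι => q.1 < q.2) =
      univ.filter (fun q => q.1 < q.2) := by
    ext q
    simpa using fun h : q.1 < q.2 => h.ne
  rw [h, hpairs, ← univ_product_univ, prod_filter, prod_product]
  exact prod_congr rfl fun a _ => prod_filter _ _

lemma prod_filter_not_isDiag_map_perm [DecidableEq ι] (g : Sym2 ι → M) (σ : Perm ι) :
    ∏ z : Sym2 ι with ¬ z.IsDiag, g (z.map σ) = ∏ z : Sym2 ι with ¬ z.IsDiag, g z :=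
  prod_nbij' (Sym2.map σ) (Sym2.map σ.symm) (by simp [Sym2.isDiag_map σ.injective])
    (by simp [Sym2.isDiag_map σ.symm.injective]) (by simp [Sym2.map_map]) (by simp [Sym2.map_map])
    fun _ _ => rfl

lemma prod_filter_lt_comp_perm [LinearOrder ι] (f : ι → ι → M) (hf : ∀ a b, f a b = f b a)
    (σ : Perm ι) : ∏ a, ∏ b with a < b, f (σ a) (σ b) = ∏ a, ∏ b with a < b, f a b := by
  have h := prod_filter_not_isDiag_map_perm (Sym2.lift ⟨f, hf⟩) σ
  rw [← prod_filter_lt_eq_prod_filter_not_isDiag,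
    ← prod_filter_lt_eq_prod_filter_not_isDiag] at h
  simpa using h

end PairProducts

section CellAssignments

variable {p n : ℕ}

lemma ordW_comp_perm {R : Type*} [CommRing R] (w : Fin p → R) (r : Fin p → Fin p → R)
    (hr : ∀ i j, r i j = r j i) (c : Fin n → Fin p) (σ : Perm (Fin n)) :
    ordW w r (c ∘ σ) = ordW w r c := by
  simp only [ordW, Function.comp_apply]
  rw [Equiv.prod_comp σ fun a => w (c a),
    prod_filter_lt_comp_perm (fun a b => r (c a) (c b)) fun a b => hr _ _]

lemma cellConfig_comp_perm (c : Fin n → Fin p) (σ : Perm (Fin n)) :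
    cellConfig (c ∘ σ) = cellConfig c := by
  ext i
  exact card_equiv σ (by simp)

lemma sum_cellConfig (c : Fin n → Fin p) : ∑ i, cellConfig c i = n := by
  simpa [cellConfig] using
    (card_eq_sum_card_fiberwise (s := univ) (t := univ) (f := c) fun _ _ => mem_univ _).symm

lemma exists_perm_of_cellConfig_eq {c c₀ : Fin n → Fin p} (h : cellConfig c = cellConfig c₀) :
    ∃ σ : Perm (Fin n), c = c₀ ∘ σ := by
  have e : ∀ i, {a // c a = i} ≃ {a // c₀ a = i} := fun i =>
    Fintype.equivOfCardEq (by rw [Fintype.card_subtype, Fintype.card_subtype]; exact congrFun h i)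
  refine ⟨(sigmaFiberEquiv c).symm.trans ((sigmaCongrRight e).trans (sigmaFiberEquiv c₀)), ?_⟩
  funext a
  exact ((e (c a)) ⟨a, rfl⟩).prop.symm

lemma orbit_domMulAct_perm_eq (c₀ : Fin n → Fin p) :
    orbit (Perm (Fin n))ᵈᵐᵃ c₀ = {c | cellConfig c = cellConfig c₀} := by
  ext c
  constructor
  · rintro ⟨σ, rfl⟩
    exact cellConfig_comp_perm c₀ _
  · intro h
    obtain ⟨σ, rfl⟩ := exists_perm_of_cellConfig_eq h
    exact ⟨DomMulAct.mk σ, rfl⟩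

lemma card_filter_cellConfig_eq_mul_prod_factorial (c₀ : Fin n → Fin p) :
    #{c : Fin n → Fin p | cellConfig c = cellConfig c₀} * ∏ i, (cellConfig c₀ i).factorial =
      n.factorial := by
  have hstab : Nat.card (stabilizer (Perm (Fin n))ᵈᵐᵃ c₀) =
      ∏ i, (cellConfig c₀ i).factorial := by
    rw [← Nat.card_congr (subtypeEquiv (p := fun g : Perm (Fin n) => c₀ ∘ g = c₀)
        DomMulAct.mk fun _ => DomMulAct.mem_stabilizer_iff.symm),
      Nat.card_eq_fintype_card, DomMulAct.stabilizer_card]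
    simp only [Fintype.card_subtype, cellConfig]
  rw [← hstab, ← Set.ncard_coe_finset, coe_filter_univ, ← orbit_domMulAct_perm_eq,
    ← index_stabilizer, Subgroup.index_mul_card, Nat.card_congr DomMulAct.mk.symm, Nat.card_perm,
    Nat.card_eq_fintype_card, Fintype.card_fin]

lemma card_filter_cellConfig_eq (c₀ : Fin n → Fin p) :
    #{c : Fin n → Fin p | cellConfig c = cellConfig c₀} =
      Nat.multinomial univ (cellConfig c₀) := by
  have h := Nat.multinomial_spec univ (cellConfig c₀)
  rw [sum_cellConfig, ← card_filter_cellConfig_eq_mul_prod_factorial c₀, mul_comm] at h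
  exact (Nat.eq_of_mul_eq_mul_right (prod_pos fun i _ => Nat.factorial_pos _) h).symm

end CellAssignments

theorem stmt4_general {R : Type*} [CommRing R] {p : ℕ}
    (w : Fin p → R) (r : Fin p → Fin p → R)
    (hsym : ∀ i j : Fin p, r i j = r j i) (n : ℕ)
    (κ : Fin p → ℕ)
    (c₀ : Fin n → Fin p) (hc₀ : cellConfig c₀ = κ) :
    ∑ c ∈ Finset.univ.filter (fun c : Fin n → Fin p => cellConfig c = κ), ordW w r c =
      (Nat.multinomial Finset.univ κ : R) * ordW w r c₀ := by
  subst hc₀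
  have hconst : ∀ c ∈ univ.filter (fun c : Fin n → Fin p => cellConfig c = cellConfig c₀),
      ordW w r c = ordW w r c₀ := by
    intro c hc
    obtain ⟨σ, rfl⟩ := exists_perm_of_cellConfig_eq (mem_filter.mp hc).2
    exact ordW_comp_perm w r hsym c₀ σ
  rw [sum_congr rfl hconst, sum_const, card_filter_cellConfig_eq, nsmul_eq_mul]

theorem stmt4 {R : Type*} [CommRing R] {p : ℕ} (hp : 1 ≤ p)
    (w : Fin p → R) (r : Fin p → Fin p → R)
    (hsym : ∀ i j : Fin p, r i j = r j i) (n : ℕ)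
    (κ : Fin p → ℕ) (hκ : ∑ i, κ i = n)
    (c₀ : Fin n → Fin p) (hc₀ : cellConfig c₀ = κ) :
    ∑ c ∈ Finset.univ.filter (fun c : Fin n → Fin p => cellConfig c = κ), ordW w r c =
      (Nat.multinomial Finset.univ κ : R) * ordW w r c₀ :=
  stmt4_general w r hsym n κ c₀ hc₀
end

section
/- The sum over all permutations σ of Fin n and all cell assignments c : Fin n → Fin p of W^σ_n(c) equals n! · Σ_{c : Fin n → Fin p} W_n(c). (This is the combinatorial content of Proposition 1: the weighted model sum of a universally quantified two-variable sentence with the linear order axiom over an n-element domain equals n! times the weighted model sum in which the order predicate is fixed to the natural order 1 ≤ 2 ≤ … ≤ n.) -/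
/-! Relabelling the domain by `σ` turns `ordWP w r σ c` into the ordered weight of `c ∘ σ⁻¹`,
so for every `σ` the inner sum over `c` is the ordered model sum; summing over the `n!`
permutations gives the factor `n!`. -/

open Finset

/-- The order-dependent weight of a cell assignment with respect to a linear order `σ`:
the `r`-product runs over all pairs of distinct `a, b` with `σ a < σ b`. -/
def ordWP {R : Type*} [CommRing R] {p n : ℕ} (w : Fin p → R) (r : Fin p → Fin p → R)
    (σ : Equiv.Perm (Fin n)) (c : Fin n → Fin p) : R :=
  (∏ a, w (c a)) * ∏ a, ∏ b ∈ Finset.univ.filter (fun b => σ a < σ b), r (c a) (c b)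

section

variable {R : Type*} [CommRing R] {p n : ℕ} (w : Fin p → R) (r : Fin p → Fin p → R)

lemma ordWP_eq_ordW_comp_symm (σ : Equiv.Perm (Fin n)) (c : Fin n → Fin p) :
    ordWP w r σ c = ordW w r (c ∘ σ.symm) := by
  unfold ordWP ordW
  congr 1
  · exact (Equiv.prod_comp σ.symm (fun a => w (c a))).symm
  · rw [prod_sigma' _ _ (fun a b => r ((c ∘ σ.symm) a) ((c ∘ σ.symm) b)),
      prod_sigma' _ _ (fun a b => r (c a) (c b))]
    refine prod_nbij' (fun q => ⟨σ q.1, σ q.2⟩) (fun q => ⟨σ.symm q.1, σ.symm q.2⟩)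
      ?_ ?_ ?_ ?_ ?_ <;> simp

lemma sum_ordWP_eq_sum_ordW (σ : Equiv.Perm (Fin n)) :
    ∑ c : Fin n → Fin p, ordWP w r σ c = ∑ c : Fin n → Fin p, ordW w r c := by
  simp only [ordWP_eq_ordW_comp_symm]
  exact Fintype.sum_equiv (Equiv.arrowCongr σ (Equiv.refl _)) _ _ fun _ => rfl

end

theorem stmt6_general {R : Type*} [CommRing R] {p : ℕ}
    (w : Fin p → R) (r : Fin p → Fin p → R) (n : ℕ) :
    ∑ σ : Equiv.Perm (Fin n), ∑ c : Fin n → Fin p, ordWP w r σ c =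
      (n.factorial : R) * ∑ c : Fin n → Fin p, ordW w r c := by
  simp only [sum_ordWP_eq_sum_ordW, sum_const, card_univ, Fintype.card_perm, Fintype.card_fin,
    nsmul_eq_mul]

theorem stmt6 {R : Type*} [CommRing R] {p : ℕ} (hp : 1 ≤ p)
    (w : Fin p → R) (r : Fin p → Fin p → R) (n : ℕ) :
    ∑ σ : Equiv.Perm (Fin n), ∑ c : Fin n → Fin p, ordWP w r σ c =
      (n.factorial : R) * ∑ c : Fin n → Fin p, ordW w r c :=
  stmt6_general w r n
end

section
/- Let n ≥ 1. For every c : Fin (n+1) → Fin p, the predecessor weight factorizes over the last element: W¹_{n+1}(c) = W¹_n(c ∘ Fin.castSucc) · w(c(n)) · r̃(c(n−1))(c(n)) · ∏_{a=0}^{n−2} r(c(a))(c(n)). -/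
/-!
Each of the three products in `W¹` splits off the factors involving the last position: `w (c n)`,
the consecutive pair `(n - 1, n)`, and the non-consecutive pairs `(a, n)` with `a + 1 < n`.
Since every pair has `a < b`, the last position never occurs as the first entry of a pair.
-/

open Finset

/-- The predecessor weight `W¹` of a cell assignment `c : Fin n → Fin p`:
non-consecutive ordered pairs contribute an `r`-factor and consecutive
positions contribute an `r̃`-factor. -/
def predW {R : Type*} [CommRing R] {p n : ℕ} (w : Fin p → R)
    (r : Fin p → Fin p → R) (rt : Fin p → Fin p → R) (c : Fin n → Fin p) : R :=
  (∏ a, w (c a)) *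
    (∏ a : Fin n, ∏ b ∈ Finset.univ.filter
        (fun b : Fin n => (a : ℕ) < (b : ℕ) ∧ (b : ℕ) ≠ (a : ℕ) + 1),
      r (c a) (c b)) *
    ∏ a : Fin n, ∏ b ∈ Finset.univ.filter (fun b : Fin n => (b : ℕ) = (a : ℕ) + 1),
      rt (c a) (c b)

theorem Fin.prod_prod_filter_castSucc {M : Type*} [CommMonoid M] {n : ℕ}
    (P : ℕ → ℕ → Prop) [DecidableRel P] (hP : ∀ a b, P a b → a < b)
    (f : Fin (n + 1) → Fin (n + 1) → M) :
    ∏ a : Fin (n + 1), ∏ b ∈ univ.filter (fun b : Fin (n + 1) => P a b), f a b =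
      (∏ a : Fin n, ∏ b ∈ univ.filter (fun b : Fin n => P a b), f a.castSucc b.castSucc) *
        ∏ a ∈ univ.filter (fun a : Fin n => P a n), f a.castSucc (Fin.last n) := by
  have last_row : univ.filter (fun b : Fin (n + 1) => P (Fin.last n) b) = ∅ :=
    filter_eq_empty_iff.2 fun b _ hb => by
      have := hP _ _ hb
      simp only [Fin.val_last] at this
      omega
  have row (a : Fin n) :
      ∏ b ∈ univ.filter (fun b : Fin (n + 1) => P a.castSucc b), f a.castSucc b =
        (∏ b ∈ univ.filter (fun b : Fin n => P a b), f a.castSucc b.castSucc) *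
          if P a n then f a.castSucc (Fin.last n) else 1 := by
    rw [prod_filter, Fin.prod_univ_castSucc, prod_filter]
    simp only [Fin.val_castSucc, Fin.val_last]
  rw [Fin.prod_univ_castSucc, last_row, prod_empty, mul_one, prod_congr rfl fun a _ => row a,
    prod_mul_distrib, prod_ite, prod_const_one, mul_one]

theorem Fin.filter_val_lt_and_ne_succ {n : ℕ} :
    univ.filter (fun a : Fin n => (a : ℕ) < n ∧ n ≠ a + 1) =
      univ.filter (fun a : Fin n => (a : ℕ) + 1 < n) :=
  filter_congr fun a _ => by omega

theorem Fin.filter_succ_val_eq_eq_singleton {n : ℕ} (hn : 1 ≤ n) :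
    univ.filter (fun a : Fin n => n = a + 1) = {⟨n - 1, by omega⟩} := by
  ext a
  simp only [mem_filter, mem_univ, true_and, mem_singleton, Fin.ext_iff]
  omega

theorem stmt7 {R : Type*} [CommRing R] {p : ℕ}
    (w : Fin p → R) (r : Fin p → Fin p → R) (rt : Fin p → Fin p → R)
    (n : ℕ) (hn : 1 ≤ n) (c : Fin (n + 1) → Fin p) :
    predW w r rt c =
      predW w r rt (c ∘ Fin.castSucc) * w (c (Fin.last n)) *
        rt (c ⟨n - 1, by omega⟩) (c (Fin.last n)) *
        ∏ a ∈ Finset.univ.filter (fun a : Fin n => (a : ℕ) + 1 < n),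
          r (c a.castSucc) (c (Fin.last n)) := by
  unfold predW
  rw [Fin.prod_univ_castSucc,
    Fin.prod_prod_filter_castSucc (fun a b => a < b ∧ b ≠ a + 1) (fun _ _ h => h.1),
    Fin.prod_prod_filter_castSucc (fun a b => b = a + 1) (fun _ _ h => by omega),
    Fin.filter_val_lt_and_ne_succ, Fin.filter_succ_val_eq_eq_singleton hn, prod_singleton]
  simp only [Function.comp_apply, Fin.castSucc_mk]
  ring
end

section
/- The sum over all permutations σ of Fin n and all cell assignments c : Fin n → Fin p of W^{1,σ}_n(c) equals n! · Σ_{c : Fin n → Fin p} W¹_n(c); in particular, for each fixed σ, Σ_c W^{1,σ}_n(c) = Σ_c W¹_n(c). (This is the combinatorial content of the claim that the WFOMC of a two-variable sentence with the linear order axiom extended by the immediate predecessor relation equals n! times the weighted sum over models with the order and predecessor relations fixed to the natural ones.) -/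
open Finset

/-- The order-dependent predecessor weight `W^{1,σ}` with respect to a linear order `σ`:
pairs that are consecutive in the order `σ` contribute an `r̃`-factor, and
non-consecutive `σ`-ordered pairs contribute an `r`-factor. -/
def predWP {R : Type*} [CommRing R] {p n : ℕ} (w : Fin p → R)
    (r : Fin p → Fin p → R) (rt : Fin p → Fin p → R) (σ : Equiv.Perm (Fin n))
    (c : Fin n → Fin p) : R :=
  (∏ a, w (c a)) *
    (∏ a : Fin n, ∏ b ∈ Finset.univ.filter
        (fun b : Fin n => (σ a : ℕ) < (σ b : ℕ) ∧ (σ b : ℕ) ≠ (σ a : ℕ) + 1),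
      r (c a) (c b)) *
    ∏ a : Fin n, ∏ b ∈ Finset.univ.filter
        (fun b : Fin n => (σ b : ℕ) = (σ a : ℕ) + 1),
      rt (c a) (c b)

/-! Relabelling the domain along `σ` turns `W^{1,σ}(c)` into `W¹(c ∘ σ⁻¹)`, and `c ↦ c ∘ σ⁻¹`
is a bijection of cell assignments, so every `σ` contributes the same total and the `n!`
permutations give the factor `n!`. -/

lemma prod_prod_filter_comp_equiv {M ι κ : Type*} [CommMonoid M] [Fintype ι] [Fintype κ]
    (e : ι ≃ κ) (P : κ → κ → Prop) [DecidableRel P] (g : ι → ι → M) :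
    ∏ a, ∏ b ∈ univ.filter (fun b => P (e a) (e b)), g a b =
      ∏ a, ∏ b ∈ univ.filter (P a), g (e.symm a) (e.symm b) := by
  simp only [prod_filter]
  rw [← e.prod_comp]
  refine prod_congr rfl fun a _ => ?_
  rw [← e.prod_comp]
  simp only [Equiv.symm_apply_apply]

lemma predWP_eq_predW_comp_symm {R : Type*} [CommRing R] {p n : ℕ} (w : Fin p → R)
    (r : Fin p → Fin p → R) (rt : Fin p → Fin p → R) (σ : Equiv.Perm (Fin n))
    (c : Fin n → Fin p) : predWP w r rt σ c = predW w r rt (c ∘ σ.symm) := by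
  unfold predW predWP
  rw [prod_prod_filter_comp_equiv σ (fun x y : Fin n => (x : ℕ) < y ∧ (y : ℕ) ≠ x + 1),
    prod_prod_filter_comp_equiv σ (fun x y : Fin n => (y : ℕ) = x + 1),
    ← σ.symm.prod_comp (fun a => w (c a))]
  rfl

lemma sum_predWP_eq_sum_predW {R : Type*} [CommRing R] {p n : ℕ} (w : Fin p → R)
    (r : Fin p → Fin p → R) (rt : Fin p → Fin p → R) (σ : Equiv.Perm (Fin n)) :
    ∑ c : Fin n → Fin p, predWP w r rt σ c = ∑ c : Fin n → Fin p, predW w r rt c :=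
  Fintype.sum_equiv (σ.arrowCongr (Equiv.refl (Fin p))) _ _
    (predWP_eq_predW_comp_symm w r rt σ)

theorem stmt10_general {R : Type*} [CommRing R] {p : ℕ}
    (w : Fin p → R) (r : Fin p → Fin p → R) (rt : Fin p → Fin p → R)
    (n : ℕ) :
    (∑ σ : Equiv.Perm (Fin n), ∑ c : Fin n → Fin p, predWP w r rt σ c =
        (n.factorial : R) * ∑ c : Fin n → Fin p, predW w r rt c) ∧
    (∀ σ : Equiv.Perm (Fin n),
        ∑ c : Fin n → Fin p, predWP w r rt σ c =
          ∑ c : Fin n → Fin p, predW w r rt c) := by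
  refine ⟨?_, sum_predWP_eq_sum_predW w r rt⟩
  rw [sum_congr rfl fun σ _ => sum_predWP_eq_sum_predW w r rt σ, sum_const, card_univ,
    Fintype.card_perm, Fintype.card_fin, nsmul_eq_mul]

theorem stmt10 {R : Type*} [CommRing R] {p : ℕ} (hp : 1 ≤ p)
    (w : Fin p → R) (r : Fin p → Fin p → R) (rt : Fin p → Fin p → R)
    (n : ℕ) (hn : 1 ≤ n) :
    (∑ σ : Equiv.Perm (Fin n), ∑ c : Fin n → Fin p, predWP w r rt σ c =
        (n.factorial : R) * ∑ c : Fin n → Fin p, predW w r rt c) ∧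
    (∀ σ : Equiv.Perm (Fin n),
        ∑ c : Fin n → Fin p, predWP w r rt σ c =
          ∑ c : Fin n → Fin p, predW w r rt c) :=
  stmt10_general w r rt n
end

section
/- Let n ≥ 3. Define T by: T_1(δ_l, l, l) = w(l) and T_1 = 0 otherwise; for 1 ≤ h ≤ n−2 and κ(l) ≥ 1, T_{h+1}(κ, t₀, l) = Σ_{t : (κ−δ_l)(t) ≥ 1} T_h(κ−δ_l, t₀, t) · w(l) · r̃(t)(l) · ∏_i r(i)(l)^{(κ−δ_l−δ_t)(i)}; and at the last step, T_n(κ, t₀, l) = Σ_{t} T_{n−1}(κ−δ_l, t₀, t) · w(l) · r̃(t)(l) · r̃(l)(t₀) · ∏_i r(i)(l)^{(κ−δ_l−δ_t−δ_{t₀})(i)}, the sum over t for which κ−δ_l−δ_t−δ_{t₀} is componentwise nonnegative. Then for every κ with Σ_i κ(i) = n and every t₀, t ∈ Fin p: T_n(κ, t₀, t) = Σ over all c : Fin n → Fin p with config(c) = κ, c(0) = t₀ and c(n−1) = t of W°_n(c). -/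
open Finset

/-- The cyclic weight `W°` of a cell assignment: cyclically consecutive positions
(including the wrap-around pair) contribute `r̃`-factors and all other ordered
pairs contribute `r`-factors. -/
def cycW {R : Type*} [CommRing R] {p n : ℕ} (w : Fin p → R)
    (r : Fin p → Fin p → R) (rt : Fin p → Fin p → R) (c : Fin n → Fin p) : R :=
  (∏ a, w (c a)) *
    (∏ a : Fin n, ∏ b ∈ Finset.univ.filter
        (fun b : Fin n => (a : ℕ) < (b : ℕ) ∧ (b : ℕ) ≠ (a : ℕ) + 1 ∧
          ¬((a : ℕ) = 0 ∧ (b : ℕ) = n - 1)),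
      r (c a) (c b)) *
    (∏ a : Fin n, ∏ b ∈ Finset.univ.filter (fun b : Fin n => (b : ℕ) = (a : ℕ) + 1),
      rt (c a) (c b)) *
    (if hn : 0 < n then rt (c ⟨n - 1, by omega⟩) (c ⟨0, hn⟩) else 1)

/-- The dynamic-programming table for the cyclic predecessor relation,
before the last step: it also records the cell of the first element. -/
def Tc {R : Type*} [CommRing R] {p : ℕ} (w : Fin p → R) (r : Fin p → Fin p → R)
    (rt : Fin p → Fin p → R) : ℕ → (Fin p → ℕ) → Fin p → Fin p → R
  | 0, _, _, _ => 0
  | 1, κ, t0, t => if κ = delta t ∧ t0 = t then w t else 0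
  | h + 2, κ, t0, l =>
      if 1 ≤ κ l then
        ∑ t ∈ Finset.univ.filter (fun t : Fin p => 1 ≤ (κ - delta l) t),
          Tc w r rt (h + 1) (κ - delta l) t0 t * w l * rt t l *
            ∏ i, r i l ^ ((κ - delta l - delta t) i)
      else 0

/-- The last step of the dynamic program for the cyclic predecessor relation:
`T_n(κ, t₀, l) = ∑_t T_{n-1}(κ-δ_l, t₀, t) * w l * r̃ t l * r̃ l t₀ *
∏ i, r i l ^ ((κ-δ_l-δ_t-δ_{t₀}) i)`, the sum over those `t` for which
`κ - δ_l - δ_t - δ_{t₀}` is componentwise nonnegative. -/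
def TcLast {R : Type*} [CommRing R] {p : ℕ} (w : Fin p → R) (r : Fin p → Fin p → R)
    (rt : Fin p → Fin p → R) (n : ℕ) (κ : Fin p → ℕ) (t0 l : Fin p) : R :=
  ∑ t ∈ Finset.univ.filter
      (fun t : Fin p => ∀ i, delta l i + delta t i + delta t0 i ≤ κ i),
    Tc w r rt (n - 1) (κ - delta l) t0 t * w l * rt t l * rt l t0 *
      ∏ i, r i l ^ ((κ - delta l - delta t - delta t0) i)

/-! Removing the last position of a cell assignment, `c = Fin.snoc c' l`, splits off exactly the
factors that involve `l`: `w l`, the `r̃`-factor from the predecessor `c' (last)`, and the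
`r`-factors `r (c' a) l` of all earlier positions `a`, which collect into
`∏ i, r i l ^ (config c' - δ_{c' last}) i`. Hence `T_h(κ, t₀, t)` is the sum, over assignments with
configuration `κ` and end cells `t₀, t`, of the path weight `linW` (the weight with `r̃`-factors
for consecutive positions only, no wrap-around). At the last step the wrap-around pair turns the
`r`-factor between the first and the last position into `r̃ l t₀`, which is why `δ_{t₀}` is also
subtracted. Summands excluded by the filters vanish, since no assignment realises them.
-/

namespace CellAssignment

variable {R : Type*} [CommRing R] {p : ℕ}

lemma cellConfig_snoc {m : ℕ} (c : Fin m → Fin p) (l : Fin p) :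
    cellConfig (Fin.snoc c l : Fin (m + 1) → Fin p) = cellConfig c + delta l := by
  funext i
  simp only [cellConfig, Finset.card_filter, Fin.sum_univ_castSucc, Fin.snoc_castSucc,
    Fin.snoc_last, Pi.add_apply, delta, eq_comm]

lemma cellConfig_snoc_eq_iff {m : ℕ} {κ : Fin p → ℕ} {l : Fin p} (hl : 1 ≤ κ l)
    (c : Fin m → Fin p) :
    cellConfig (Fin.snoc c l : Fin (m + 1) → Fin p) = κ ↔ cellConfig c = κ - delta l := by
  rw [cellConfig_snoc, funext_iff, funext_iff]
  refine forall_congr' fun i => ?_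
  by_cases hi : i = l
  · subst hi; simp only [Pi.add_apply, Pi.sub_apply, delta, if_true]; omega
  · simp [delta, hi]

lemma cellConfig_fin_one (c : Fin 1 → Fin p) : cellConfig c = delta (c 0) := by
  funext i
  simp only [cellConfig, Finset.card_filter, Fin.sum_univ_one, delta, eq_comm]

lemma delta_apply_le {κ : Fin p → ℕ} {l : Fin p} (hl : 1 ≤ κ l) (i : Fin p) :
    delta l i ≤ κ i := by
  unfold delta
  split_ifs with h
  · exact h ▸ hl
  · exact Nat.zero_le _

lemma one_le_cellConfig_apply {k : ℕ} (c : Fin k → Fin p) (a : Fin k) :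
    1 ≤ cellConfig c (c a) :=
  Finset.card_pos.mpr ⟨a, by simp⟩

lemma delta_add_delta_le_cellConfig {k : ℕ} (c : Fin k → Fin p) {a₀ a₁ : Fin k}
    (h : a₀ ≠ a₁) (i : Fin p) :
    delta (c a₀) i + delta (c a₁) i ≤ cellConfig c i := by
  have hpair : delta (c a₀) i + delta (c a₁) i = #{a ∈ {a₀, a₁} | c a = i} := by
    rw [Finset.card_filter, Finset.sum_pair h]
    simp only [delta, eq_comm]
  rw [hpair]
  exact Finset.card_le_card (Finset.filter_subset_filter _ (Finset.subset_univ _))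

lemma card_filter_erase_eq {k : ℕ} (c : Fin k → Fin p) {s : Finset (Fin k)} {a₀ : Fin k}
    (ha₀ : a₀ ∈ s) (i : Fin p) :
    #{a ∈ s.erase a₀ | c a = i} = #{a ∈ s | c a = i} - delta (c a₀) i := by
  rw [Finset.filter_erase]
  by_cases hc : c a₀ = i
  · rw [Finset.card_erase_of_mem (by simp [ha₀, hc])]
    simp [delta, hc]
  · rw [Finset.erase_eq_of_notMem (by simp [hc])]
    simp [delta, Ne.symm hc]

lemma prod_comp_eq_prod_pow_card {M : Type*} [CommMonoid M] {k : ℕ} (c : Fin k → Fin p)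
    (s : Finset (Fin k)) (f : Fin p → M) :
    ∏ a ∈ s, f (c a) = ∏ i, f i ^ #{a ∈ s | c a = i} := by
  rw [← Finset.prod_fiberwise' s c f]
  simp only [Finset.prod_const]

lemma prod_erase_comp {M : Type*} [CommMonoid M] {k : ℕ} (c : Fin k → Fin p) (a₀ : Fin k)
    (f : Fin p → M) :
    ∏ a ∈ univ.erase a₀, f (c a) = ∏ i, f i ^ (cellConfig c i - delta (c a₀) i) := by
  rw [prod_comp_eq_prod_pow_card]
  simp only [card_filter_erase_eq c (Finset.mem_univ a₀), cellConfig]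

lemma prod_erase_erase_comp {M : Type*} [CommMonoid M] {k : ℕ} (c : Fin k → Fin p)
    {a₀ a₁ : Fin k} (h : a₁ ≠ a₀) (f : Fin p → M) :
    ∏ a ∈ (univ.erase a₀).erase a₁, f (c a)
      = ∏ i, f i ^ (cellConfig c i - delta (c a₀) i - delta (c a₁) i) := by
  rw [prod_comp_eq_prod_pow_card]
  simp only [card_filter_erase_eq c (Finset.mem_erase.mpr ⟨h, Finset.mem_univ a₁⟩),
    card_filter_erase_eq c (Finset.mem_univ a₀), cellConfig]

def cellAssignments (m : ℕ) (κ : Fin p → ℕ) (t₀ t : Fin p) : Finset (Fin (m + 1) → Fin p) :=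
  univ.filter fun c => cellConfig c = κ ∧ c 0 = t₀ ∧ c (Fin.last m) = t

lemma mem_cellAssignments {m : ℕ} {κ : Fin p → ℕ} {t₀ t : Fin p} {c : Fin (m + 1) → Fin p} :
    c ∈ cellAssignments m κ t₀ t ↔ cellConfig c = κ ∧ c 0 = t₀ ∧ c (Fin.last m) = t := by
  simp [cellAssignments]

lemma one_le_of_mem_cellAssignments {m : ℕ} {κ : Fin p → ℕ} {t₀ t : Fin p}
    {c : Fin (m + 1) → Fin p} (hc : c ∈ cellAssignments m κ t₀ t) : 1 ≤ κ t := by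
  obtain ⟨hκ, -, ht⟩ := mem_cellAssignments.mp hc
  simpa [← hκ, ← ht] using one_le_cellConfig_apply c (Fin.last m)

lemma delta_add_delta_le_of_mem_cellAssignments {m : ℕ} (hm : 1 ≤ m) {κ : Fin p → ℕ}
    {t₀ t : Fin p} {c : Fin (m + 1) → Fin p} (hc : c ∈ cellAssignments m κ t₀ t) (i : Fin p) :
    delta t₀ i + delta t i ≤ κ i := by
  obtain ⟨hκ, h₀, ht⟩ := mem_cellAssignments.mp hc
  have hne : (0 : Fin (m + 1)) ≠ Fin.last m := Fin.ne_of_val_ne (by simp; omega)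
  simpa [← hκ, ← h₀, ← ht] using delta_add_delta_le_cellConfig c hne i

lemma snoc_zero_eq {α : Type*} {m : ℕ} (c : Fin (m + 1) → α) (l : α) :
    (Fin.snoc c l : Fin (m + 2) → α) 0 = c 0 :=
  Fin.snoc_castSucc (α := fun _ => α) (i := 0) (p := c) (x := l)

lemma sum_cellAssignments_succ {M : Type*} [AddCommMonoid M] {m : ℕ} {κ : Fin p → ℕ}
    {t₀ l : Fin p} (hl : 1 ≤ κ l) (F : (Fin (m + 2) → Fin p) → M) :
    ∑ c ∈ cellAssignments (m + 1) κ t₀ l, F c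
      = ∑ t, ∑ c ∈ cellAssignments m (κ - delta l) t₀ t, F (Fin.snoc c l) := by
  have hfiber : ∀ t, cellAssignments m (κ - delta l) t₀ t
      = {c ∈ univ.filter (fun c : Fin (m + 1) → Fin p => cellConfig c = κ - delta l ∧ c 0 = t₀) |
          c (Fin.last m) = t} := by
    intro t
    ext c
    simp [mem_cellAssignments, and_assoc]
  have hsnoc_init : ∀ c ∈ cellAssignments (m + 1) κ t₀ l, Fin.snoc (Fin.init c) l = c :=
    fun c hc => (mem_cellAssignments.mp hc).2.2 ▸ Fin.snoc_init_self c
  simp only [hfiber, Finset.sum_fiberwise]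
  refine Finset.sum_nbij' Fin.init (Fin.snoc · l) ?_ ?_ ?_ ?_ ?_
  · intro c hc
    obtain ⟨hκ, h₀, -⟩ := mem_cellAssignments.mp hc
    rw [← hsnoc_init c hc, cellConfig_snoc_eq_iff hl] at hκ
    rw [← hsnoc_init c hc, snoc_zero_eq] at h₀
    exact Finset.mem_filter.mpr ⟨Finset.mem_univ _, hκ, h₀⟩
  · intro c hc
    simp only [Finset.mem_filter, Finset.mem_univ, true_and] at hc
    rw [mem_cellAssignments, cellConfig_snoc_eq_iff hl, snoc_zero_eq]
    exact ⟨hc.1, hc.2, Fin.snoc_last (α := fun _ => Fin p) (p := c) (x := l)⟩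
  · exact hsnoc_init
  · intro c _
    exact Fin.init_snoc (α := fun _ => Fin p) (p := c) (x := l)
  · intro c hc
    rw [hsnoc_init c hc]

lemma prod_prod_ite_snoc {M α : Type*} [CommMonoid M] {m : ℕ} (P : ℕ → ℕ → Prop)
    [DecidableRel P] (hP : ∀ b ≤ m + 1, ¬P (m + 1) b) (f : α → α → M)
    (c : Fin (m + 1) → α) (l : α) :
    ∏ a : Fin (m + 2), ∏ b : Fin (m + 2),
        (if P a b then f (Fin.snoc (α := fun _ => α) c l a) (Fin.snoc (α := fun _ => α) c l b)
          else 1)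
      = (∏ a : Fin (m + 1), ∏ b : Fin (m + 1), if P a b then f (c a) (c b) else 1) *
        ∏ a : Fin (m + 1), if P a (m + 1) then f (c a) l else 1 := by
  have hlast : ∏ b : Fin (m + 2),
      (if P (Fin.last (m + 1)) b then
        f (Fin.snoc (α := fun _ => α) c l (Fin.last (m + 1)))
          (Fin.snoc (α := fun _ => α) c l b) else 1) = 1 :=
    Finset.prod_eq_one fun b _ => if_neg (hP b (Nat.lt_succ_iff.mp b.isLt))
  rw [Fin.prod_univ_castSucc, hlast, mul_one]
  simp only [Fin.prod_univ_castSucc, Fin.snoc_castSucc, Fin.snoc_last, Fin.val_castSucc,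
    Fin.val_last, Finset.prod_mul_distrib]

def linW (w : Fin p → R) (r rt : Fin p → Fin p → R) {n : ℕ} (c : Fin n → Fin p) : R :=
  (∏ a, w (c a)) *
    (∏ a : Fin n, ∏ b ∈ univ.filter (fun b : Fin n => (a : ℕ) < (b : ℕ) ∧ (b : ℕ) ≠ (a : ℕ) + 1),
      r (c a) (c b)) *
    (∏ a : Fin n, ∏ b ∈ univ.filter (fun b : Fin n => (b : ℕ) = (a : ℕ) + 1), rt (c a) (c b))

lemma linW_one (w : Fin p → R) (r rt : Fin p → Fin p → R) (c : Fin 1 → Fin p) :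
    linW w r rt c = w (c 0) := by
  simp [linW]

lemma prod_w_snoc {m : ℕ} (w : Fin p → R) (c : Fin (m + 1) → Fin p) (l : Fin p) :
    ∏ a, w ((Fin.snoc c l : Fin (m + 2) → Fin p) a) = (∏ a, w (c a)) * w l := by
  simp only [Fin.prod_univ_castSucc (n := m + 1), Fin.snoc_castSucc, Fin.snoc_last]

lemma prod_rt_snoc {m : ℕ} (rt : Fin p → Fin p → R) (c : Fin (m + 1) → Fin p) (l : Fin p) :
    ∏ a : Fin (m + 2), ∏ b ∈ univ.filter (fun b : Fin (m + 2) => (b : ℕ) = (a : ℕ) + 1),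
        rt ((Fin.snoc c l : Fin (m + 2) → Fin p) a) ((Fin.snoc c l : Fin (m + 2) → Fin p) b)
      = (∏ a : Fin (m + 1), ∏ b ∈ univ.filter (fun b : Fin (m + 1) => (b : ℕ) = (a : ℕ) + 1),
          rt (c a) (c b)) * rt (c (Fin.last m)) l := by
  simp only [Finset.prod_filter]
  rw [prod_prod_ite_snoc (fun a b => b = a + 1) (fun b hb => by omega)]
  congr 1
  rw [Fintype.prod_eq_single (Fin.last m) fun a ha => if_neg fun h => ha (Fin.ext (by simp; omega))]
  simp

lemma linW_snoc {m : ℕ} (w : Fin p → R) (r rt : Fin p → Fin p → R)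
    (c : Fin (m + 1) → Fin p) (l : Fin p) :
    linW w r rt (Fin.snoc c l : Fin (m + 2) → Fin p)
      = linW w r rt c * w l * rt (c (Fin.last m)) l *
        ∏ a ∈ univ.erase (Fin.last m), r (c a) l := by
  have hr : ∏ a : Fin (m + 2), ∏ b ∈ univ.filter
        (fun b : Fin (m + 2) => (a : ℕ) < (b : ℕ) ∧ (b : ℕ) ≠ (a : ℕ) + 1),
        r ((Fin.snoc c l : Fin (m + 2) → Fin p) a) ((Fin.snoc c l : Fin (m + 2) → Fin p) b)
      = (∏ a : Fin (m + 1), ∏ b ∈ univ.filter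
          (fun b : Fin (m + 1) => (a : ℕ) < (b : ℕ) ∧ (b : ℕ) ≠ (a : ℕ) + 1), r (c a) (c b)) *
        ∏ a ∈ univ.erase (Fin.last m), r (c a) l := by
    simp only [Finset.prod_filter]
    rw [prod_prod_ite_snoc (fun a b => a < b ∧ b ≠ a + 1) (fun b hb => by omega)]
    congr 1
    rw [← Finset.prod_filter]
    congr 1
    ext a
    have := a.isLt
    simp only [Finset.mem_filter, Finset.mem_univ, Finset.mem_erase, and_true, true_and,
      Fin.ne_iff_vne, Fin.val_last]
    omega
  simp only [linW, prod_w_snoc, prod_rt_snoc, hr]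
  ring

lemma cycW_snoc {m : ℕ} (w : Fin p → R) (r rt : Fin p → Fin p → R)
    (c : Fin (m + 1) → Fin p) (l : Fin p) :
    cycW w r rt (Fin.snoc c l : Fin (m + 2) → Fin p)
      = linW w r rt c * w l * rt (c (Fin.last m)) l * rt l (c 0) *
        ∏ a ∈ (univ.erase (Fin.last m)).erase 0, r (c a) l := by
  have hr : ∏ a : Fin (m + 2), ∏ b ∈ univ.filter (fun b : Fin (m + 2) =>
        (a : ℕ) < (b : ℕ) ∧ (b : ℕ) ≠ (a : ℕ) + 1 ∧ ¬((a : ℕ) = 0 ∧ (b : ℕ) = m + 2 - 1)),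
        r ((Fin.snoc c l : Fin (m + 2) → Fin p) a) ((Fin.snoc c l : Fin (m + 2) → Fin p) b)
      = (∏ a : Fin (m + 1), ∏ b ∈ univ.filter
          (fun b : Fin (m + 1) => (a : ℕ) < (b : ℕ) ∧ (b : ℕ) ≠ (a : ℕ) + 1), r (c a) (c b)) *
        ∏ a ∈ (univ.erase (Fin.last m)).erase 0, r (c a) l := by
    simp only [Finset.prod_filter]
    rw [prod_prod_ite_snoc (fun a b => a < b ∧ b ≠ a + 1 ∧ ¬(a = 0 ∧ b = m + 2 - 1))
      (fun b hb => by omega)]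
    congr 1
    · refine Finset.prod_congr rfl fun a _ => Finset.prod_congr rfl fun b _ => ?_
      have := b.isLt
      exact if_congr (by omega) rfl rfl
    · rw [← Finset.prod_filter]
      congr 1
      ext a
      have := a.isLt
      simp only [Finset.mem_filter, Finset.mem_univ, Finset.mem_erase, and_true, true_and,
        Fin.ne_iff_vne, Fin.val_last, Fin.val_zero]
      omega
  have hwrap : (Fin.snoc c l : Fin (m + 2) → Fin p) ⟨m + 2 - 1, by omega⟩ = l :=
    Fin.snoc_last (α := fun _ => Fin p) (p := c) (x := l)
  have hzero : (Fin.snoc c l : Fin (m + 2) → Fin p) ⟨0, by omega⟩ = c 0 :=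
    Fin.snoc_castSucc (α := fun _ => Fin p) (i := 0) (p := c) (x := l)
  simp only [cycW, linW, dif_pos (Nat.succ_pos (m + 1)), prod_w_snoc, prod_rt_snoc, hr, hwrap,
    hzero]
  ring

theorem Tc_eq_sum_linW (w : Fin p → R) (r rt : Fin p → Fin p → R) (m : ℕ) (κ : Fin p → ℕ)
    (t₀ t : Fin p) :
    Tc w r rt (m + 1) κ t₀ t = ∑ c ∈ cellAssignments m κ t₀ t, linW w r rt c := by
  induction m generalizing κ t with
  | zero =>
    rw [cellAssignments, Finset.sum_filter,
      ← (Equiv.funUnique (Fin 1) (Fin p)).symm.sum_comp]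
    simp only [Tc, Equiv.funUnique_symm_apply, uniqueElim_const, linW_one, cellConfig_fin_one]
    rw [Finset.sum_eq_single t (fun x _ hx => if_neg fun h => hx h.2.2) (by simp)]
    exact if_congr ⟨fun ⟨hκ, ht⟩ => ⟨hκ.symm, ht.symm, rfl⟩, fun ⟨hκ, ht, _⟩ => ⟨hκ.symm, ht.symm⟩⟩
      rfl rfl
  | succ m ih =>
    rw [Tc]
    split_ifs with hl
    · rw [sum_cellAssignments_succ hl, Finset.sum_filter_of_ne]
      · refine Finset.sum_congr rfl fun t' _ => ?_
        rw [ih, Finset.sum_mul, Finset.sum_mul, Finset.sum_mul]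
        refine Finset.sum_congr rfl fun c hc => ?_
        obtain ⟨hκ, -, ht'⟩ := mem_cellAssignments.mp hc
        rw [linW_snoc, prod_erase_comp c _ (r · t), hκ, ht']
        rfl
      · intro t' _ hne
        rw [ih] at hne
        obtain ⟨c, hc, -⟩ := Finset.exists_ne_zero_of_sum_ne_zero
          (left_ne_zero_of_mul (left_ne_zero_of_mul (left_ne_zero_of_mul hne)))
        exact one_le_of_mem_cellAssignments hc
    · exact (Finset.sum_eq_zero fun c hc => absurd (one_le_of_mem_cellAssignments hc) hl).symm

theorem TcLast_eq_sum_cycW (w : Fin p → R) (r rt : Fin p → Fin p → R) {m : ℕ} (hm : 1 ≤ m)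
    (κ : Fin p → ℕ) (t₀ l : Fin p) :
    TcLast w r rt (m + 2) κ t₀ l = ∑ c ∈ cellAssignments (m + 1) κ t₀ l, cycW w r rt c := by
  have h0 : (0 : Fin (m + 1)) ≠ Fin.last m := Fin.ne_of_val_ne (by simp; omega)
  rw [TcLast, show m + 2 - 1 = m + 1 from rfl]
  by_cases hl : 1 ≤ κ l
  · rw [sum_cellAssignments_succ hl, Finset.sum_filter_of_ne]
    · refine Finset.sum_congr rfl fun t _ => ?_
      rw [Tc_eq_sum_linW, Finset.sum_mul, Finset.sum_mul, Finset.sum_mul, Finset.sum_mul]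
      refine Finset.sum_congr rfl fun c hc => ?_
      obtain ⟨hκ, h₀, ht⟩ := mem_cellAssignments.mp hc
      rw [cycW_snoc, prod_erase_erase_comp c h0 (r · l), hκ, h₀, ht]
      rfl
    · intro t _ hne i
      rw [Tc_eq_sum_linW] at hne
      obtain ⟨c, hc, -⟩ := Finset.exists_ne_zero_of_sum_ne_zero (left_ne_zero_of_mul
        (left_ne_zero_of_mul (left_ne_zero_of_mul (left_ne_zero_of_mul hne))))
      have hle := delta_add_delta_le_of_mem_cellAssignments hm hc i
      have hδ := delta_apply_le hl i
      simp only [Pi.sub_apply] at hle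
      omega
  · rw [Finset.filter_false_of_mem fun t _ h => hl (le_trans (by simp [delta, add_assoc]) (h l)),
      Finset.sum_empty]
    exact (Finset.sum_eq_zero fun c hc => absurd (one_le_of_mem_cellAssignments hc) hl).symm

end CellAssignment

theorem stmt11 {R : Type*} [CommRing R] {p : ℕ}
    (w : Fin p → R) (r : Fin p → Fin p → R) (rt : Fin p → Fin p → R)
    (n : ℕ) (hn : 3 ≤ n) (κ : Fin p → ℕ) (t0 t : Fin p) :
    TcLast w r rt n κ t0 t =
      ∑ c ∈ Finset.univ.filter (fun c : Fin n → Fin p =>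
          cellConfig c = κ ∧ c ⟨0, by omega⟩ = t0 ∧ c ⟨n - 1, by omega⟩ = t),
        cycW w r rt c := by
  obtain ⟨m, rfl⟩ : ∃ m, n = m + 2 := ⟨n - 2, by omega⟩
  exact CellAssignment.TcLast_eq_sum_cycW w r rt (by omega) κ t0 t
end

section
/- Let n ≥ 3. The sum over all permutations σ of Fin n and all cell assignments c : Fin n → Fin p of W^{°,σ}_n(c) equals n! · Σ_{c : Fin n → Fin p} W°_n(c); in particular, for each fixed σ, Σ_c W^{°,σ}_n(c) = Σ_c W°_n(c). (This is the combinatorial content of the claim that the WFOMC of a two-variable sentence with the linear order axiom extended by the cyclic predecessor relation equals n! times the weighted sum over models where the order and cyclic predecessor relations are fixed to the natural ones.) -/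
/-!
Relabelling the domain by `σ` turns `W^{°,σ}` into `W^{°,id}`: `W^{°,σ}(c ∘ σ) = W^{°,id}(c)`.
Since `c ↦ c ∘ σ` is a bijection of the cell assignments, every `σ` contributes the same sum,
and `W^{°,id} = W°` because, for `n ≥ 2`, the cyclic successor pairs of the identity order are
the pairs `(a, a + 1)` together with the wrap-around pair `(n - 1, 0)`.
-/

open Finset

/-- The order-dependent cyclic weight `W^{°,σ}` with respect to a linear order `σ`:
pairs that are cyclically consecutive in the order `σ` (including the wrap-around
pair) contribute `r̃`-factors and all other `σ`-ordered pairs contribute `r`-factors. -/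
def cycWP {R : Type*} [CommRing R] {p n : ℕ} (w : Fin p → R)
    (r : Fin p → Fin p → R) (rt : Fin p → Fin p → R) (σ : Equiv.Perm (Fin n))
    (c : Fin n → Fin p) : R :=
  (∏ a, w (c a)) *
    (∏ a : Fin n, ∏ b ∈ Finset.univ.filter
        (fun b : Fin n => b ≠ a ∧
          ((σ b : ℕ) = (σ a : ℕ) + 1 ∨ ((σ a : ℕ) = n - 1 ∧ (σ b : ℕ) = 0))),
      rt (c a) (c b)) *
    ∏ a : Fin n, ∏ b ∈ Finset.univ.filter
        (fun b : Fin n => (σ a : ℕ) < (σ b : ℕ) ∧ (σ b : ℕ) ≠ (σ a : ℕ) + 1 ∧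
          ¬((σ a : ℕ) = 0 ∧ (σ b : ℕ) = n - 1)),
      r (c a) (c b)

theorem Equiv.prod_prod_filter_comp {α β M : Type*} [Fintype α] [Fintype β] [CommMonoid M]
    (e : α ≃ β) {P : α → α → Prop} {Q : β → β → Prop} [DecidableRel P] [DecidableRel Q]
    (hPQ : ∀ a b, P a b ↔ Q (e a) (e b)) (f : β → β → M) :
    ∏ a, ∏ b ∈ univ.filter (P a), f (e a) (e b) = ∏ a, ∏ b ∈ univ.filter (Q a), f a b := by
  simp only [prod_filter, hPQ]
  rw [← e.prod_comp fun a => ∏ b, if Q a b then f a b else 1]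
  exact prod_congr rfl fun a _ => e.prod_comp fun b => if Q (e a) b then f (e a) b else 1

theorem Fin.prod_prod_filter_cyclic_succ {M : Type*} [CommMonoid M] {n : ℕ} (hn : 2 ≤ n)
    (g : Fin n → Fin n → M) :
    ∏ a : Fin n, ∏ b ∈ univ.filter
        (fun b : Fin n => b ≠ a ∧ ((b : ℕ) = a + 1 ∨ ((a : ℕ) = n - 1 ∧ (b : ℕ) = 0))), g a b =
      (∏ a : Fin n, ∏ b ∈ univ.filter (fun b : Fin n => (b : ℕ) = a + 1), g a b) *
        g ⟨n - 1, by omega⟩ ⟨0, by omega⟩ := by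
  have hsplit : ∀ a b : Fin n,
      (if b ≠ a ∧ ((b : ℕ) = a + 1 ∨ ((a : ℕ) = n - 1 ∧ (b : ℕ) = 0)) then g a b else 1) =
        (if (b : ℕ) = a + 1 then g a b else 1) *
          if a = ⟨n - 1, by omega⟩ then (if b = ⟨0, by omega⟩ then g a b else 1) else 1 := by
    intro a b
    simp only [ne_eq, Fin.ext_iff]
    split_ifs <;> first | rfl | (exfalso; omega) | simp
  simp only [prod_filter, hsplit, prod_mul_distrib, Fintype.prod_ite_eq', prod_ite_irrel,
    prod_const_one]

section CyclicWeight

variable {R : Type*} [CommRing R] {p n : ℕ} (w : Fin p → R) (r rt : Fin p → Fin p → R)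

theorem cycWP_comp_perm (σ : Equiv.Perm (Fin n)) (c : Fin n → Fin p) :
    cycWP w r rt σ (c ∘ σ) = cycWP w r rt 1 c := by
  unfold cycWP
  congr 1
  · congr 1
    · exact Equiv.prod_comp σ fun a => w (c a)
    · exact σ.prod_prod_filter_comp (by simp) fun a b => rt (c a) (c b)
  · exact σ.prod_prod_filter_comp (by simp) fun a b => r (c a) (c b)

theorem cycWP_one (hn : 2 ≤ n) (c : Fin n → Fin p) : cycWP w r rt 1 c = cycW w r rt c := by
  -- `rw` rewrites `⇑1` inside the `DecidablePred` instances of the filters too; `simp` would not.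
  rw [cycWP, cycW, Equiv.Perm.coe_one, dif_pos (by omega)]
  simp only [id_eq]
  rw [Fin.prod_prod_filter_cyclic_succ hn fun a b => rt (c a) (c b)]
  ring

theorem sum_cycWP_eq_sum_cycW (hn : 2 ≤ n) (σ : Equiv.Perm (Fin n)) :
    ∑ c : Fin n → Fin p, cycWP w r rt σ c = ∑ c : Fin n → Fin p, cycW w r rt c := by
  rw [← (σ.symm.arrowCongr (Equiv.refl (Fin p))).sum_comp]
  exact sum_congr rfl fun c _ => (cycWP_comp_perm w r rt σ c).trans (cycWP_one w r rt hn c)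

end CyclicWeight

theorem stmt13_general {R : Type*} [CommRing R] {p : ℕ}
    (w : Fin p → R) (r : Fin p → Fin p → R) (rt : Fin p → Fin p → R)
    (n : ℕ) (hn : 3 ≤ n) :
    (∑ σ : Equiv.Perm (Fin n), ∑ c : Fin n → Fin p, cycWP w r rt σ c =
        (n.factorial : R) * ∑ c : Fin n → Fin p, cycW w r rt c) ∧
    (∀ σ : Equiv.Perm (Fin n),
        ∑ c : Fin n → Fin p, cycWP w r rt σ c =
          ∑ c : Fin n → Fin p, cycW w r rt c) := by
  have hσ := sum_cycWP_eq_sum_cycW w r rt (by omega : 2 ≤ n)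
  refine ⟨?_, hσ⟩
  rw [sum_congr rfl fun σ _ => hσ σ, sum_const, card_univ, Fintype.card_perm, Fintype.card_fin,
    nsmul_eq_mul]

theorem stmt13 {R : Type*} [CommRing R] {p : ℕ} (hp : 1 ≤ p)
    (w : Fin p → R) (r : Fin p → Fin p → R) (rt : Fin p → Fin p → R)
    (n : ℕ) (hn : 3 ≤ n) :
    (∑ σ : Equiv.Perm (Fin n), ∑ c : Fin n → Fin p, cycWP w r rt σ c =
        (n.factorial : R) * ∑ c : Fin n → Fin p, cycW w r rt c) ∧
    (∀ σ : Equiv.Perm (Fin n),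
        ∑ c : Fin n → Fin p, cycWP w r rt σ c =
          ∑ c : Fin n → Fin p, cycW w r rt c) :=
  stmt13_general w r rt n hn
end

section
/- Let k ≥ 1 and n > k. The sum over all permutations σ of Fin n and all cell assignments c : Fin n → Fin p of W^{(k),σ}_n(c) equals n! · Σ_{c : Fin n → Fin p} W^{(k)}_n(c); in particular, for each fixed σ, Σ_c W^{(k),σ}_n(c) = Σ_c W^{(k)}_n(c). (This is the combinatorial content of the claim in Theorem 1 that the WFOMC of a two-variable sentence with the general linear order axiom Linear(≤, Pred₁, …, Pred_k) equals n! times the weighted sum over models where the order and all k predecessor relations are fixed to the natural ones.) -/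
/-!
Relabelling the domain by `σ` turns `W^{(k),σ}` at `c` into `W^{(k)}` at `c ∘ σ⁻¹`, and
`c ↦ c ∘ σ⁻¹` is a bijection of cell assignments. Hence every permutation contributes the same
sum, and there are `n!` of them.
-/

open Finset

/-- The `k`-predecessor weight `W^{(k)}` of a cell assignment. -/
def kW {R : Type*} [CommRing R] {p n : ℕ} (k : ℕ) (w : Fin p → R)
    (r : Fin p → Fin p → R) (rt : ℕ → Fin p → Fin p → R) (c : Fin n → Fin p) : R :=
  (∏ a, w (c a)) *
    (∏ a : Fin n, ∏ b ∈ Finset.univ.filter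
        (fun b : Fin n => (a : ℕ) < (b : ℕ) ∧ (b : ℕ) - (a : ℕ) > k),
      r (c a) (c b)) *
    ∏ s ∈ Finset.Icc 1 k, ∏ a : Fin n,
      ∏ b ∈ Finset.univ.filter (fun b : Fin n => (b : ℕ) = (a : ℕ) + s),
        rt s (c a) (c b)

/-- The order-dependent `k`-predecessor weight `W^{(k),σ}` with respect to a
linear order `σ`: pairs at `σ`-distance `s ≤ k` contribute an `r̃_s`-factor and
pairs at `σ`-distance greater than `k` contribute an `r`-factor. -/
def kWP {R : Type*} [CommRing R] {p n : ℕ} (k : ℕ) (w : Fin p → R)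
    (r : Fin p → Fin p → R) (rt : ℕ → Fin p → Fin p → R) (σ : Equiv.Perm (Fin n))
    (c : Fin n → Fin p) : R :=
  (∏ a, w (c a)) *
    (∏ s ∈ Finset.Icc 1 k, ∏ a : Fin n,
      ∏ b ∈ Finset.univ.filter (fun b : Fin n => (σ b : ℕ) = (σ a : ℕ) + s),
        rt s (c a) (c b)) *
    ∏ a : Fin n, ∏ b ∈ Finset.univ.filter
        (fun b : Fin n => (σ b : ℕ) - (σ a : ℕ) > k),
      r (c a) (c b)

theorem Finset.prod_prod_filter_equiv {α β M : Type*} [Fintype α] [Fintype β] [CommMonoid M]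
    (e : α ≃ β) (q : β → β → Prop) [∀ a, DecidablePred (q a)] (f : β → β → M) :
    ∏ a : β, ∏ b ∈ univ.filter (q a), f a b =
      ∏ a : α, ∏ b ∈ univ.filter (fun b => q (e a) (e b)), f (e a) (e b) := by
  rw [← e.prod_comp]
  refine prod_congr rfl fun a _ => ?_
  rw [prod_filter, prod_filter, ← e.prod_comp]

theorem kWP_eq_kW_comp_symm {R : Type*} [CommRing R] {p n : ℕ} (k : ℕ) (w : Fin p → R)
    (r : Fin p → Fin p → R) (rt : ℕ → Fin p → Fin p → R) (σ : Equiv.Perm (Fin n))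
    (c : Fin n → Fin p) :
    kWP k w r rt σ c = kW k w r rt (c ∘ σ.symm) := by
  unfold kW kWP
  rw [mul_right_comm]
  congr 1
  congr 1
  · exact (σ.symm.prod_comp (fun a => w (c a))).symm
  · conv_rhs => rw [prod_prod_filter_equiv σ]
    simp only [Function.comp_apply, Equiv.symm_apply_apply]
    refine prod_congr rfl fun a _ => prod_congr (filter_congr fun b _ => ?_) fun _ _ => rfl
    -- truncated subtraction: `σ b - σ a > k` already forces `σ a < σ b`
    omega
  · refine prod_congr rfl fun s _ => ?_
    conv_rhs => rw [prod_prod_filter_equiv σ]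
    simp only [Function.comp_apply, Equiv.symm_apply_apply]

theorem sum_kWP_eq_sum_kW {R : Type*} [CommRing R] {p n : ℕ} (k : ℕ) (w : Fin p → R)
    (r : Fin p → Fin p → R) (rt : ℕ → Fin p → Fin p → R) (σ : Equiv.Perm (Fin n)) :
    ∑ c : Fin n → Fin p, kWP k w r rt σ c = ∑ c : Fin n → Fin p, kW k w r rt c := by
  simp only [kWP_eq_kW_comp_symm]
  exact (σ.arrowCongr (Equiv.refl (Fin p))).sum_comp (kW k w r rt)

theorem stmt17_general {R : Type*} [CommRing R] {p : ℕ} (k : ℕ)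
    (w : Fin p → R) (r : Fin p → Fin p → R) (rt : ℕ → Fin p → Fin p → R)
    (n : ℕ) :
    (∑ σ : Equiv.Perm (Fin n), ∑ c : Fin n → Fin p, kWP k w r rt σ c =
        (n.factorial : R) * ∑ c : Fin n → Fin p, kW k w r rt c) ∧
    (∀ σ : Equiv.Perm (Fin n),
        ∑ c : Fin n → Fin p, kWP k w r rt σ c =
          ∑ c : Fin n → Fin p, kW k w r rt c) := by
  refine ⟨?_, sum_kWP_eq_sum_kW k w r rt⟩
  simp only [sum_kWP_eq_sum_kW, sum_const, card_univ, Fintype.card_perm, Fintype.card_fin,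
    nsmul_eq_mul]

theorem stmt17 {R : Type*} [CommRing R] {p : ℕ} (hp : 1 ≤ p) (k : ℕ) (hk : 1 ≤ k)
    (w : Fin p → R) (r : Fin p → Fin p → R) (rt : ℕ → Fin p → Fin p → R)
    (n : ℕ) (hn : k < n) :
    (∑ σ : Equiv.Perm (Fin n), ∑ c : Fin n → Fin p, kWP k w r rt σ c =
        (n.factorial : R) * ∑ c : Fin n → Fin p, kW k w r rt c) ∧
    (∀ σ : Equiv.Perm (Fin n),
        ∑ c : Fin n → Fin p, kWP k w r rt σ c =
          ∑ c : Fin n → Fin p, kW k w r rt c) :=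
  stmt17_general k w r rt n
end
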